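/- For C = 2^p * n + 2^(p-1) - 1 with p ≥ 1, applying p-1 general cycles followed by one final halving (the full 'cascade') transforms C into 3^(p-1) * n + (3^(p-1) - 1)/2. -/

import Mathlib

/-!
Shifting by one conjugates the odd cycle into multiplication by `3/2`: `oddCycle (2a - 1) + 1 = 3a`.
Since `C + 1 = 2^(p-1) (2n + 1)`, the `p - 1` odd cycles turn `C + 1` into `3^(p-1) (2n + 1)`,
and halving `3^(p-1) (2n + 1) - 1` gives `3^(p-1) n + (3^(p-1) - 1) / 2`.
-/

def oddCycle (x : ℕ) : ℕ := (3 * x + 1) / 2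

lemma oddCycle_two_mul_sub_one {a : ℕ} (ha : 1 ≤ a) : oddCycle (2 * a - 1) = 3 * a - 1 := by
  unfold oddCycle
  omega

lemma oddCycle_iterate_two_pow_mul_sub_one (k : ℕ) {a : ℕ} (ha : 1 ≤ a) :
    oddCycle^[k] (2 ^ k * a - 1) = 3 ^ k * a - 1 := by
  induction k generalizing a with
  | zero => simp
  | succ k ih =>
    have h2a : 1 ≤ 2 ^ k * a := Nat.one_le_iff_ne_zero.mpr (by positivity)
    calc oddCycle^[k + 1] (2 ^ (k + 1) * a - 1)
        = oddCycle^[k] (oddCycle (2 * (2 ^ k * a) - 1)) := by rw [pow_succ', mul_assoc]; rfl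
      _ = oddCycle^[k] (2 ^ k * (3 * a) - 1) := by
          rw [oddCycle_two_mul_sub_one h2a, mul_left_comm]
      _ = 3 ^ (k + 1) * a - 1 := by rw [ih (by omega), pow_succ, mul_assoc]

theorem cascade_transform (p n : ℕ) (hp : 1 ≤ p) :
    (oddCycle^[p - 1] (2 ^ p * n + 2 ^ (p - 1) - 1)) / 2 =
      3 ^ (p - 1) * n + (3 ^ (p - 1) - 1) / 2 := by
  obtain ⟨k, rfl⟩ : ∃ k, p = k + 1 := ⟨p - 1, by omega⟩
  have hC : 2 ^ (k + 1) * n + 2 ^ k = 2 ^ k * (2 * n + 1) := by ring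
  have hk : 1 ≤ 3 ^ k := Nat.one_le_pow _ _ (by norm_num)
  have hexpand : 3 ^ k * (2 * n + 1) = 2 * (3 ^ k * n) + 3 ^ k := by ring
  rw [Nat.add_sub_cancel, hC, oddCycle_iterate_two_pow_mul_sub_one k (by omega), hexpand]
  omega
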